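/- arXiv:1804.04823 — 4 statements merged into one kernel-verified Lean document; each statement's English description precedes it below -/
import Mathlib

section
/- Let X be a second countable locally compact Hausdorff abelian topological group and let b1, b2 : X → X be continuous endomorphisms such that Ker(b1 − b2) = {0}. Let μ1, μ2 and ν1, ν2 be Borel probability measures on X, all having nonvanishing characteristic functions. Let T : X² → X² be the map T(x1, x2) = (x1 + x2, b1 x1 + b2 x2). If the pushforward of μ1 ⊗ μ2 under T equals the pushforward of ν1 ⊗ ν2 under T, then ν1 = μ1 and ν2 = μ2. -/
open MeasureTheory

/-!
Since `Ker (b₁ - b₂) = {0}`, the map `T` is injective: `T (x₁, x₂) = 0` forces `x₂ = -x₁` and then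
`(b₁ - b₂) x₁ = 0`. A continuous injection of a Polish space is a measurable embedding
(Lusin–Souslin), so pushing forward along `T` is injective on measures and `μ₁ ⊗ μ₂ = ν₁ ⊗ ν₂`;
the factors are recovered as the marginals.
-/

/-- A (continuous) character of a topological abelian group `X`: a continuous
map into the circle group (i.e. unimodular, multiplicative on sums). -/
def IsChar {X : Type*} [TopologicalSpace X] [AddCommGroup X] (χ : X → ℂ) : Prop :=
  Continuous χ ∧ (∀ x, ‖χ x‖ = 1) ∧ ∀ x₁ x₂, χ (x₁ + x₂) = χ x₁ * χ x₂

/-- The characteristic function `μ̂(y) = ∫ (x, y) dμ(x)` of `μ` does not vanish. -/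
def HasNonvanishingCharFun {X : Type*} [TopologicalSpace X] [AddCommGroup X]
    [MeasurableSpace X] (μ : Measure X) : Prop :=
  ∀ χ : X → ℂ, IsChar χ → ∫ x, χ x ∂μ ≠ 0

/-- The right uniformity of a locally compact group is complete, and countably generated when the
group is first countable. -/
lemma IsTopologicalAddGroup.polishSpace {X : Type*} [TopologicalSpace X] [AddCommGroup X]
    [IsTopologicalAddGroup X] [WeaklyLocallyCompactSpace X] [T0Space X]
    [SecondCountableTopology X] : PolishSpace X := by
  let := IsTopologicalAddGroup.rightUniformSpace X
  have := isUniformAddGroup_of_addCommGroup (G := X)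
  have := IsRightUniformAddGroup.completeSpace_of_weaklyLocallyCompactSpace (G := X)
  have := IsUniformAddGroup.uniformity_countably_generated (α := X)
  infer_instance

lemma injective_add_prodMk_add {X Y : Type*} [AddCommGroup X] [AddCommGroup Y] (b₁ b₂ : X →+ Y)
    (hker : ∀ x, b₁ x - b₂ x = 0 → x = 0) :
    Function.Injective fun q : X × X => (q.1 + q.2, b₁ q.1 + b₂ q.2) := by
  let T : X × X →+ X × Y := (AddMonoidHom.fst X X + AddMonoidHom.snd X X).prod
    (b₁.comp (AddMonoidHom.fst X X) + b₂.comp (AddMonoidHom.snd X X))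
  refine (injective_iff_map_eq_zero T).2 fun ⟨x₁, x₂⟩ hx => ?_
  obtain ⟨hsum, hb⟩ : x₁ + x₂ = 0 ∧ b₁ x₁ + b₂ x₂ = 0 := Prod.mk.inj hx
  obtain rfl : x₂ = -x₁ := eq_neg_of_add_eq_zero_right hsum
  obtain rfl : x₁ = 0 := hker x₁ (by simpa [sub_eq_add_neg] using hb)
  simp

lemma Measure.prod_injective {α β : Type*} [MeasurableSpace α] [MeasurableSpace β]
    {μ₁ ν₁ : Measure α} {μ₂ ν₂ : Measure β} [IsProbabilityMeasure μ₁] [IsProbabilityMeasure μ₂]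
    [IsProbabilityMeasure ν₁] [IsProbabilityMeasure ν₂] (h : μ₁.prod μ₂ = ν₁.prod ν₂) :
    μ₁ = ν₁ ∧ μ₂ = ν₂ :=
  ⟨by rw [← Measure.fst_prod (μ := μ₁) (ν := μ₂), h, Measure.fst_prod],
    by rw [← Measure.snd_prod (μ := μ₁) (ν := μ₂), h, Measure.snd_prod]⟩

theorem two_forms_unique_determination_general
    {X : Type*} [TopologicalSpace X] [AddCommGroup X] [IsTopologicalAddGroup X]
    [LocallyCompactSpace X] [T2Space X] [SecondCountableTopology X]
    [MeasurableSpace X] [BorelSpace X]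
    (b₁ b₂ : X →+ X) (hb₁ : Continuous b₁) (hb₂ : Continuous b₂)
    (hker₁₂ : ∀ x, b₁ x - b₂ x = 0 → x = 0)
    (μ₁ μ₂ ν₁ ν₂ : Measure X)
    [IsProbabilityMeasure μ₁] [IsProbabilityMeasure μ₂]
    [IsProbabilityMeasure ν₁] [IsProbabilityMeasure ν₂]
    (T : X × X → X × X)
    (hT : T = fun q => (q.1 + q.2, b₁ q.1 + b₂ q.2))
    (h : (μ₁.prod μ₂).map T = (ν₁.prod ν₂).map T) :
    ν₁ = μ₁ ∧ ν₂ = μ₂ := by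
  have := IsTopologicalAddGroup.polishSpace (X := X)
  subst hT
  have hT_cont : Continuous fun q : X × X => (q.1 + q.2, b₁ q.1 + b₂ q.2) := by fun_prop
  have hprod :=
    (hT_cont.measurableEmbedding (injective_add_prodMk_add b₁ b₂ hker₁₂)).map_injective h
  exact Measure.prod_injective hprod.symm

/-- The distribution of `(ξ₁ + ξ₂, b₁ξ₁ + b₂ξ₂)` with `Ker (b₁ - b₂) = {0}`
uniquely determines the distributions of `ξ₁` and `ξ₂`. -/
theorem two_forms_unique_determination
    {X : Type*} [TopologicalSpace X] [AddCommGroup X] [IsTopologicalAddGroup X]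
    [LocallyCompactSpace X] [T2Space X] [SecondCountableTopology X]
    [MeasurableSpace X] [BorelSpace X]
    (b₁ b₂ : X →+ X) (hb₁ : Continuous b₁) (hb₂ : Continuous b₂)
    (hker₁₂ : ∀ x, b₁ x - b₂ x = 0 → x = 0)
    (μ₁ μ₂ ν₁ ν₂ : Measure X)
    [IsProbabilityMeasure μ₁] [IsProbabilityMeasure μ₂]
    [IsProbabilityMeasure ν₁] [IsProbabilityMeasure ν₂]
    (hμ₁ : HasNonvanishingCharFun μ₁) (hμ₂ : HasNonvanishingCharFun μ₂)
    (hν₁ : HasNonvanishingCharFun ν₁) (hν₂ : HasNonvanishingCharFun ν₂)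
    (T : X × X → X × X)
    (hT : T = fun q => (q.1 + q.2, b₁ q.1 + b₂ q.2))
    (h : (μ₁.prod μ₂).map T = (ν₁.prod ν₂).map T) :
    ν₁ = μ₁ ∧ ν₂ = μ₂ :=
  two_forms_unique_determination_general b₁ b₂ hb₁ hb₂ hker₁₂ μ₁ μ₂ ν₁ ν₂ T hT h
end

section
/- Let Y be a locally compact Hausdorff abelian topological group and let β1, …, βn : Y → Y be continuous endomorphisms such that for all i ≠ j the set (β_i − β_j)(Y) is dense in Y. Let ψ1, …, ψn and B be continuous complex-valued functions on Y satisfying ψ1(u + β1 v) + ψ2(u + β2 v) + ⋯ + ψn(u + βn v) = B(v) for all u, v ∈ Y. Then each ψ_j is a polynomial on Y of degree at most n − 1; moreover, if n ≥ 2 and B(y) = 0 for all y ∈ Y, then each ψ_j is a polynomial of degree at most n − 2. -/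
/-- The finite difference operator `Δ_h f(y) = f(y + h) - f(y)`. -/
def fdiff {Y : Type*} [Add Y] (h : Y) (f : Y → ℂ) : Y → ℂ :=
  fun y => f (y + h) - f y

/-- `f` is a polynomial of degree at most `m`: `Δ_h^{m+1} f ≡ 0` for every `h`. -/
def IsPolynomialOfDegreeAtMost {Y : Type*} [Add Y] (m : ℕ) (f : Y → ℂ) : Prop :=
  ∀ h : Y, ∀ y : Y, (fdiff h)^[m + 1] f y = 0

/-!
Comparing the equation at `(u - β_a h, v + h)` with the equation at `(u, v)` eliminates `ψ_a`,
replacing each `ψ_i` by `Δ_{(β_i - β_a) h} ψ_i` and `B` by `Δ_h B`. Eliminating every `ψ_i`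
with `i ≠ j` in this way shows that the mixed difference of `ψ_j` with increments
`(β_j - β_i) y_i`, `i ≠ j`, taken at `u + β_j v`, equals the mixed difference of `B` with
increments `y_i` taken at `v`. So it is constant in `u`, hence killed by one more difference,
and it vanishes when `B = 0`. These increments range over dense sets and `ψ_j` is continuous,
so the same holds for arbitrary increments, in particular for `n - 1` copies of a single `h`.
-/

open Finset

section FiniteDifference

variable {Y ι : Type*} [AddCommGroup Y]

theorem fdiff_comm (a b : Y) (f : Y → ℂ) : fdiff a (fdiff b f) = fdiff b (fdiff a f) := by
  funext y
  simp only [fdiff, add_right_comm y a b]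
  ring

@[simp]
theorem fdiff_zero_left (f : Y → ℂ) : fdiff 0 f = 0 := by
  funext y
  simp [fdiff]

@[simp]
theorem fdiff_zero_right (h : Y) : fdiff h (0 : Y → ℂ) = 0 := by
  funext y
  simp [fdiff]

/-- The mixed difference `∏_{i ∈ s} Δ_{k i}`; folding over the multiset `s.val` is legitimate
because the `Δ`'s commute. -/
def mdiff (s : Finset ι) (k : ι → Y) (f : Y → ℂ) : Y → ℂ :=
  @Multiset.foldr _ _ (fun i g => fdiff (k i) g) ⟨fun i i' g => fdiff_comm (k i) (k i') g⟩ f s.val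

@[simp]
theorem mdiff_empty (k : ι → Y) (f : Y → ℂ) : mdiff ∅ k f = f :=
  rfl

variable [DecidableEq ι]

theorem mdiff_insert {s : Finset ι} {a : ι} (ha : a ∉ s) (k : ι → Y) (f : Y → ℂ) :
    mdiff (insert a s) k f = fdiff (k a) (mdiff s k f) := by
  rw [mdiff, insert_val_of_notMem ha, Multiset.foldr_cons]
  rfl

theorem mdiff_fdiff (s : Finset ι) (k : ι → Y) (h : Y) (f : Y → ℂ) :
    mdiff s k (fdiff h f) = fdiff h (mdiff s k f) := by
  induction s using Finset.induction_on with
  | empty => simp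
  | insert a s ha ih => rw [mdiff_insert ha, mdiff_insert ha, ih, fdiff_comm]

@[simp]
theorem mdiff_zero (s : Finset ι) (k : ι → Y) : mdiff s k (0 : Y → ℂ) = 0 := by
  induction s using Finset.induction_on with
  | empty => simp
  | insert a s ha ih => rw [mdiff_insert ha, ih, fdiff_zero_right]

theorem mdiff_const (s : Finset ι) (h : Y) (f : Y → ℂ) :
    mdiff s (fun _ => h) f = (fdiff h)^[#s] f := by
  induction s using Finset.induction_on with
  | empty => simp
  | insert a s ha ih =>
    rw [mdiff_insert ha, ih, card_insert_of_notMem ha, Function.iterate_succ_apply']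

theorem continuous_mdiff [TopologicalSpace Y] [ContinuousAdd Y] (s : Finset ι) {f : Y → ℂ}
    (hf : Continuous f) : Continuous fun p : (ι → Y) × Y => mdiff s p.1 f p.2 := by
  induction s using Finset.induction_on with
  | empty => exact hf.comp continuous_snd
  | insert a s ha ih =>
    simp only [mdiff_insert ha, fdiff]
    exact (ih.comp (continuous_fst.prodMk (continuous_snd.add
      ((continuous_apply a).comp continuous_fst)))).sub ih

theorem iterate_fdiff_eq_zero_of_dense [TopologicalSpace Y] [ContinuousAdd Y] {f : Y → ℂ}
    (hf : Continuous f) {s : Finset ι} {D : ι → Set Y} (hD : ∀ i ∈ s, Dense (D i))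
    (H : ∀ k : ι → Y, (∀ i ∈ s, k i ∈ D i) → mdiff s k f = 0) (h : Y) :
    (fdiff h)^[#s] f = 0 := by
  rw [← mdiff_const]
  funext u
  have hcont : Continuous fun k : ι → Y => mdiff s k f u :=
    (continuous_mdiff s hf).comp (continuous_id.prodMk continuous_const)
  refine congrFun (hcont.ext_on (dense_pi (s : Set ι) hD) continuous_const fun k hk => ?_) _
  simp [H k hk]

end FiniteDifference

section FunctionalEquation

variable {Y ι : Type*} [AddCommGroup Y] (β : ι → Y →+ Y) {ψ : ι → Y → ℂ} {B : Y → ℂ}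

theorem sum_fdiff_apply_add_eq_fdiff {t : Finset ι} (heq : ∀ u v, ∑ i ∈ t, ψ i (u + β i v) = B v)
    (a : ι) (h u v : Y) :
    ∑ i ∈ t, fdiff (β i h - β a h) (ψ i) (u + β i v) = fdiff h B v := by
  have harg : ∀ i, u + β i v + (β i h - β a h) = u - β a h + β i (v + h) := fun i => by
    rw [map_add]; abel
  simp only [fdiff, sum_sub_distrib, harg, heq]

theorem mdiff_apply_add_eq_mdiff [DecidableEq ι] {j : ι} {s : Finset ι} (hj : j ∉ s)
    (heq : ∀ u v, ∑ i ∈ insert j s, ψ i (u + β i v) = B v) {k y : ι → Y}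
    (hk : ∀ i ∈ s, k i = β j (y i) - β i (y i)) (u v : Y) :
    mdiff s k (ψ j) (u + β j v) = mdiff s y B v := by
  induction s using Finset.induction_on generalizing ψ B u v with
  | empty => simpa using heq u v
  | insert a s ha ih =>
    have hja : j ≠ a := fun h => hj (h ▸ mem_insert_self a s)
    set ψ' : ι → Y → ℂ := fun i => fdiff (β i (y a) - β a (y a)) (ψ i)
    have heq' : ∀ u v, ∑ i ∈ insert j s, ψ' i (u + β i v) = fdiff (y a) B v := by
      intro u v
      rw [← sum_fdiff_apply_add_eq_fdiff β heq a (y a) u v, Finset.insert_comm j a s,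
        sum_insert (s := insert j s) (by simp [Ne.symm hja, ha])]
      simp [ψ']
    have hψ' : ψ' j = fdiff (k a) (ψ j) := by rw [hk a (mem_insert_self a s)]
    rw [mdiff_insert ha, mdiff_insert ha, ← mdiff_fdiff, ← mdiff_fdiff, ← hψ']
    exact ih (fun h => hj (mem_insert_of_mem h)) heq' (fun i hi => hk i (mem_insert_of_mem hi)) u v

theorem exists_mdiff_erase_eq_const [Fintype ι] [DecidableEq ι]
    (heq : ∀ u v, ∑ i, ψ i (u + β i v) = B v) (j : ι) {k : ι → Y}
    (hk : ∀ i ∈ univ.erase j, k i ∈ Set.range fun y => β j y - β i y) :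
    ∃ y : ι → Y, ∀ u, mdiff (univ.erase j) k (ψ j) u = mdiff (univ.erase j) y B 0 := by
  choose! y hy using hk
  refine ⟨y, fun u => ?_⟩
  simpa using mdiff_apply_add_eq_mdiff β (notMem_erase j univ)
    (by rwa [insert_erase (mem_univ j)]) (fun i hi => (hy i hi).symm) u 0

end FunctionalEquation

theorem polynomial_solutions_of_functional_equation_general
    {Y : Type*} [TopologicalSpace Y] [AddCommGroup Y] [IsTopologicalAddGroup Y]
    {n : ℕ} (β : Fin n → Y →+ Y)
    (hdense : ∀ i j, i ≠ j → Dense (Set.range fun y => β i y - β j y))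
    (ψ : Fin n → Y → ℂ) (hψ : ∀ j, Continuous (ψ j))
    (B : Y → ℂ)
    (heq : ∀ u v : Y, ∑ j, ψ j (u + β j v) = B v) :
    (∀ j, IsPolynomialOfDegreeAtMost (n - 1) (ψ j)) ∧
      (2 ≤ n → (∀ y, B y = 0) → ∀ j, IsPolynomialOfDegreeAtMost (n - 2) (ψ j)) := by
  have hD : ∀ j, ∀ i ∈ univ.erase j, Dense (Set.range fun y => β j y - β i y) :=
    fun j i hi => hdense j i (ne_of_mem_erase hi).symm
  have hcard : ∀ j : Fin n, #(univ.erase j) = n - 1 := fun j => by simp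
  constructor
  · intro j h y
    have hψh : Continuous (fdiff h (ψ j)) := ((hψ j).comp (continuous_add_const h)).sub (hψ j)
    have hkill := iterate_fdiff_eq_zero_of_dense hψh (hD j) (fun k hk => ?_) h
    · rw [Function.iterate_succ_apply, ← hcard j, hkill, Pi.zero_apply]
    obtain ⟨y, hy⟩ := exists_mdiff_erase_eq_const β heq j hk
    funext u
    simp [mdiff_fdiff, fdiff, hy]
  · intro hn hB j h
    have hB0 : B = 0 := funext hB
    have hkill := iterate_fdiff_eq_zero_of_dense (hψ j) (hD j) (fun k hk => ?_) h
    · rw [hcard, show n - 1 = n - 2 + 1 by omega] at hkill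
      exact congrFun hkill
    obtain ⟨y, hy⟩ := exists_mdiff_erase_eq_const β heq j hk
    funext u
    simp [hy, hB0]

/-- Lemma 1: if continuous functions `ψ₁, …, ψₙ` and `B` on a locally compact
Hausdorff abelian topological group `Y` satisfy
`∑ⱼ ψⱼ(u + βⱼ v) = B(v)` for all `u, v`, where the `βⱼ` are continuous
endomorphisms with `(βᵢ - βⱼ)(Y)` dense in `Y` for `i ≠ j`, then each `ψⱼ` is a
polynomial of degree at most `n - 1`; and if moreover `n ≥ 2` and `B ≡ 0`, then
each `ψⱼ` is a polynomial of degree at most `n - 2`. -/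
theorem polynomial_solutions_of_functional_equation
    {Y : Type*} [TopologicalSpace Y] [AddCommGroup Y] [IsTopologicalAddGroup Y]
    [LocallyCompactSpace Y] [T2Space Y]
    {n : ℕ} (β : Fin n → Y →+ Y) (hβ : ∀ j, Continuous (β j))
    (hdense : ∀ i j, i ≠ j → Dense (Set.range fun y => β i y - β j y))
    (ψ : Fin n → Y → ℂ) (hψ : ∀ j, Continuous (ψ j))
    (B : Y → ℂ) (hB : Continuous B)
    (heq : ∀ u v : Y, ∑ j, ψ j (u + β j v) = B v) :
    (∀ j, IsPolynomialOfDegreeAtMost (n - 1) (ψ j)) ∧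
      (2 ≤ n → (∀ y, B y = 0) → ∀ j, IsPolynomialOfDegreeAtMost (n - 2) (ψ j)) :=
  polynomial_solutions_of_functional_equation_general β hdense ψ hψ B heq
end

section
/- Let Y be an abelian group and let β1, β2, β3, β4 : Y → Y be endomorphisms such that β_i − β_j is surjective for all i ≠ j. Let f1, f2, f3, f4 : Y → ℂ be nonvanishing functions with f_j(0) = 1 and f_j(−y) = conj(f_j(y)) for all y ∈ Y, satisfying f1(u + β1 v) f2(u + β2 v) f3(u + β3 v) f4(u + β4 v) = 1 for all u, v ∈ Y. Then for each j the function ψ_j(y) = log |f_j(y)| satisfies ψ_j(u + v) + ψ_j(u − v) = 2ψ_j(u) + 2ψ_j(v) for all u, v ∈ Y. -/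
/-- If four functions satisfy the Rao-type equation, the third finite
differences of the first one vanish. -/
lemma third_diff_vanish {Y : Type*} [AddCommGroup Y]
    (α b c d : Y →+ Y) (g q r s : Y → ℝ)
    (hsum : ∀ u v : Y, g (u + α v) + q (u + b v) + r (u + c v) + s (u + d v) = 0)
    (s1 : Function.Surjective fun y => α y - b y)
    (s2 : Function.Surjective fun y => α y - c y)
    (s3 : Function.Surjective fun y => α y - d y) :
    ∀ x h1 h2 h3 : Y,
      g (x + h1 + h2 + h3) - g (x + h1 + h2) - g (x + h1 + h3) - g (x + h2 + h3)
        + g (x + h1) + g (x + h2) + g (x + h3) - g x = 0 := by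
  intro x h1 h2 h3
  obtain ⟨t1, ht1⟩ := s1 h1
  obtain ⟨t2, ht2⟩ := s2 h2
  obtain ⟨t3, ht3⟩ := s3 h3
  simp only at ht1 ht2 ht3
  rw [← ht1, ← ht2, ← ht3]
  have h000 := hsum x 0
  simp only [map_zero, add_zero] at h000
  have h100 : g (x + (α t1 - b t1)) + q x + r (x + (c t1 - b t1))
      + s (x + (d t1 - b t1)) = 0 := by
    have h := hsum (x - b t1) t1
    rw [show x - b t1 + α t1 = x + (α t1 - b t1) from by abel,
        show x - b t1 + b t1 = x from by abel,
        show x - b t1 + c t1 = x + (c t1 - b t1) from by abel,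
        show x - b t1 + d t1 = x + (d t1 - b t1) from by abel] at h
    exact h
  have h010 : g (x + (α t2 - c t2)) + q (x + (b t2 - c t2)) + r x
      + s (x + (d t2 - c t2)) = 0 := by
    have h := hsum (x - c t2) t2
    rw [show x - c t2 + α t2 = x + (α t2 - c t2) from by abel,
        show x - c t2 + b t2 = x + (b t2 - c t2) from by abel,
        show x - c t2 + c t2 = x from by abel,
        show x - c t2 + d t2 = x + (d t2 - c t2) from by abel] at h
    exact h
  have h001 : g (x + (α t3 - d t3)) + q (x + (b t3 - d t3)) + r (x + (c t3 - d t3))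
      + s x = 0 := by
    have h := hsum (x - d t3) t3
    rw [show x - d t3 + α t3 = x + (α t3 - d t3) from by abel,
        show x - d t3 + b t3 = x + (b t3 - d t3) from by abel,
        show x - d t3 + c t3 = x + (c t3 - d t3) from by abel,
        show x - d t3 + d t3 = x from by abel] at h
    exact h
  have h110 : g (x + (α t1 - b t1) + (α t2 - c t2)) + q (x + (b t2 - c t2))
      + r (x + (c t1 - b t1)) + s (x + (d t1 - b t1) + (d t2 - c t2)) = 0 := by
    have h := hsum (x - b t1 - c t2) (t1 + t2)
    simp only [map_add] at h
    rw [show x - b t1 - c t2 + (α t1 + α t2) = x + (α t1 - b t1) + (α t2 - c t2) from by abel,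
        show x - b t1 - c t2 + (b t1 + b t2) = x + (b t2 - c t2) from by abel,
        show x - b t1 - c t2 + (c t1 + c t2) = x + (c t1 - b t1) from by abel,
        show x - b t1 - c t2 + (d t1 + d t2) = x + (d t1 - b t1) + (d t2 - c t2) from by abel] at h
    exact h
  have h101 : g (x + (α t1 - b t1) + (α t3 - d t3)) + q (x + (b t3 - d t3))
      + r (x + (c t1 - b t1) + (c t3 - d t3)) + s (x + (d t1 - b t1)) = 0 := by
    have h := hsum (x - b t1 - d t3) (t1 + t3)
    simp only [map_add] at h
    rw [show x - b t1 - d t3 + (α t1 + α t3) = x + (α t1 - b t1) + (α t3 - d t3) from by abel,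
        show x - b t1 - d t3 + (b t1 + b t3) = x + (b t3 - d t3) from by abel,
        show x - b t1 - d t3 + (c t1 + c t3) = x + (c t1 - b t1) + (c t3 - d t3) from by abel,
        show x - b t1 - d t3 + (d t1 + d t3) = x + (d t1 - b t1) from by abel] at h
    exact h
  have h011 : g (x + (α t2 - c t2) + (α t3 - d t3)) + q (x + (b t2 - c t2) + (b t3 - d t3))
      + r (x + (c t3 - d t3)) + s (x + (d t2 - c t2)) = 0 := by
    have h := hsum (x - c t2 - d t3) (t2 + t3)
    simp only [map_add] at h
    rw [show x - c t2 - d t3 + (α t2 + α t3) = x + (α t2 - c t2) + (α t3 - d t3) from by abel,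
        show x - c t2 - d t3 + (b t2 + b t3) = x + (b t2 - c t2) + (b t3 - d t3) from by abel,
        show x - c t2 - d t3 + (c t2 + c t3) = x + (c t3 - d t3) from by abel,
        show x - c t2 - d t3 + (d t2 + d t3) = x + (d t2 - c t2) from by abel] at h
    exact h
  have h111 : g (x + (α t1 - b t1) + (α t2 - c t2) + (α t3 - d t3))
      + q (x + (b t2 - c t2) + (b t3 - d t3)) + r (x + (c t1 - b t1) + (c t3 - d t3))
      + s (x + (d t1 - b t1) + (d t2 - c t2)) = 0 := by
    have h := hsum (x - b t1 - c t2 - d t3) (t1 + t2 + t3)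
    simp only [map_add] at h
    rw [show x - b t1 - c t2 - d t3 + (α t1 + α t2 + α t3)
          = x + (α t1 - b t1) + (α t2 - c t2) + (α t3 - d t3) from by abel,
        show x - b t1 - c t2 - d t3 + (b t1 + b t2 + b t3)
          = x + (b t2 - c t2) + (b t3 - d t3) from by abel,
        show x - b t1 - c t2 - d t3 + (c t1 + c t2 + c t3)
          = x + (c t1 - b t1) + (c t3 - d t3) from by abel,
        show x - b t1 - c t2 - d t3 + (d t1 + d t2 + d t3)
          = x + (d t1 - b t1) + (d t2 - c t2) from by abel] at h
    exact h
  linarith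

lemma quad_of_third_diff {Y : Type*} [AddCommGroup Y] (g : Y → ℝ)
    (h0 : g 0 = 0) (heven : ∀ y, g (-y) = g y)
    (hT : ∀ x h1 h2 h3 : Y,
      g (x + h1 + h2 + h3) - g (x + h1 + h2) - g (x + h1 + h3) - g (x + h2 + h3)
        + g (x + h1) + g (x + h2) + g (x + h3) - g x = 0) :
    ∀ u v : Y, g (u + v) + g (u - v) = 2 * g u + 2 * g v := by
  have h2 : ∀ x a b : Y, g (x + a + b) - g (x + a) - g (x + b) + g x
      = g (a + b) - g a - g b := by
    intro x a b
    have := hT 0 x a b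
    simp only [zero_add, h0] at this
    linarith
  intro u v
  have hdouble : g (v + v) = 4 * g v := by
    have h := h2 (-v) v v
    rw [show -v + v + v = v from by abel, show -v + v = v + -v from by abel,
        add_neg_cancel, h0, heven] at h
    linarith
  have h := h2 (u - v) v v
  rw [show u - v + v + v = u + v from by abel, show u - v + v = u from by abel,
      hdouble] at h
  linarith

/-- Step in the proof of the Rao-type four-variable theorem: if nonvanishing
functions `f₁, f₂, f₃, f₄` on an abelian group `Y` with `fⱼ(0) = 1` and
`fⱼ(-y) = conj fⱼ(y)` satisfy
`f₁(u + β₁v) f₂(u + β₂v) f₃(u + β₃v) f₄(u + β₄v) = 1`, where `βᵢ - βⱼ` is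
surjective for `i ≠ j`, then each `ψⱼ(y) = log |fⱼ(y)|` satisfies
`ψⱼ(u + v) + ψⱼ(u - v) = 2ψⱼ(u) + 2ψⱼ(v)`. -/
theorem log_modulus_satisfies_quadratic_equation
    {Y : Type*} [AddCommGroup Y]
    (β : Fin 4 → Y →+ Y)
    (hsurj : ∀ i j, i ≠ j → Function.Surjective fun y => β i y - β j y)
    (f : Fin 4 → Y → ℂ)
    (hne : ∀ j, ∀ y, f j y ≠ 0)
    (hone : ∀ j, f j 0 = 1)
    (hconj : ∀ j, ∀ y, f j (-y) = starRingEnd ℂ (f j y))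
    (heq : ∀ u v : Y,
      f 0 (u + β 0 v) * f 1 (u + β 1 v) * f 2 (u + β 2 v) * f 3 (u + β 3 v) = 1) :
    ∀ j, ∀ u v : Y,
      Real.log ‖f j (u + v)‖ + Real.log ‖f j (u - v)‖ =
        2 * Real.log ‖f j u‖ + 2 * Real.log ‖f j v‖ := by
  set ψ : Fin 4 → Y → ℝ := fun j y => Real.log ‖f j y‖ with hψ
  have h0 : ∀ j, ψ j 0 = 0 := by
    intro j; simp [hψ, hone j]
  have heven : ∀ j y, ψ j (-y) = ψ j y := by
    intro j y; simp [hψ, hconj j y]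
  have hsum : ∀ u v : Y,
      ψ 0 (u + β 0 v) + ψ 1 (u + β 1 v) + ψ 2 (u + β 2 v) + ψ 3 (u + β 3 v) = 0 := by
    intro u v
    have h := heq u v
    have hn : ‖f 0 (u + β 0 v)‖ * ‖f 1 (u + β 1 v)‖ * ‖f 2 (u + β 2 v)‖
        * ‖f 3 (u + β 3 v)‖ = 1 := by
      rw [← norm_mul, ← norm_mul, ← norm_mul, h, norm_one]
    have hne' : ∀ (j : Fin 4) (y : Y), ‖f j y‖ ≠ 0 := fun j y =>
      norm_ne_zero_iff.mpr (hne j y)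
    have hl : Real.log (‖f 0 (u + β 0 v)‖ * ‖f 1 (u + β 1 v)‖ * ‖f 2 (u + β 2 v)‖
        * ‖f 3 (u + β 3 v)‖) = 0 := by rw [hn, Real.log_one]
    rw [Real.log_mul (mul_ne_zero (mul_ne_zero (hne' 0 _) (hne' 1 _)) (hne' 2 _)) (hne' 3 _),
        Real.log_mul (mul_ne_zero (hne' 0 _) (hne' 1 _)) (hne' 2 _),
        Real.log_mul (hne' 0 _) (hne' 1 _)] at hl
    simp only [hψ]
    linarith
  intro j u v
  have key : ∀ u v : Y, ψ j (u + v) + ψ j (u - v) = 2 * ψ j u + 2 * ψ j v := by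
    apply quad_of_third_diff (ψ j) (h0 j) (heven j)
    fin_cases j
    · exact third_diff_vanish (β 0) (β 1) (β 2) (β 3) (ψ 0) (ψ 1) (ψ 2) (ψ 3)
        hsum (hsurj 0 1 (by decide)) (hsurj 0 2 (by decide)) (hsurj 0 3 (by decide))
    · exact third_diff_vanish (β 1) (β 0) (β 2) (β 3) (ψ 1) (ψ 0) (ψ 2) (ψ 3)
        (fun u v => by have := hsum u v; linarith)
        (hsurj 1 0 (by decide)) (hsurj 1 2 (by decide)) (hsurj 1 3 (by decide))
    · exact third_diff_vanish (β 2) (β 0) (β 1) (β 3) (ψ 2) (ψ 0) (ψ 1) (ψ 3)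
        (fun u v => by have := hsum u v; linarith)
        (hsurj 2 0 (by decide)) (hsurj 2 1 (by decide)) (hsurj 2 3 (by decide))
    · exact third_diff_vanish (β 3) (β 0) (β 1) (β 2) (ψ 3) (ψ 0) (ψ 1) (ψ 2)
        (fun u v => by have := hsum u v; linarith)
        (hsurj 3 0 (by decide)) (hsurj 3 1 (by decide)) (hsurj 3 2 (by decide))
  exact key u v
end

section
/- Let X be a second countable locally compact Hausdorff abelian topological group, let b1, b2, b3 : X → X be continuous endomorphisms, let x0 ∈ X with x0 ≠ 0 and b1 x0 = b2 x0, let a > 0, and let μ be an arbitrary Borel probability measure on X. Set μ1 = μ2 = e(2a E_{x0}), ν1 = e(a E_{x0}), ν2 = e(3a E_{x0}), and μ3 = ν3 = μ. Let T : X³ → X² be T(x1, x2, x3) = (x1 + x2 + x3, b1 x1 + b2 x2 + b3 x3). Then the pushforward of μ1 ⊗ μ2 ⊗ μ3 under T equals the pushforward of ν1 ⊗ ν2 ⊗ ν3 under T, yet there is no x ∈ X with ν1 = μ1 ∗ E_x. (Hence the kernel conditions Ker(b_i − b_j) = {0} cannot be omitted from the group-theoretic analogue of C.R. Rao's theorem.)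 -/
open MeasureTheory

/-- The Poisson distribution `e(λ E_{x₀}) = e^{-λ} ∑ₙ (λⁿ/n!) E_{n x₀}` on a
group `X`. -/
noncomputable def poissonMeasure {X : Type*} [AddCommMonoid X] [MeasurableSpace X]
    (lam : ℝ) (x₀ : X) : Measure X :=
  Measure.sum fun n : ℕ =>
    ENNReal.ofReal (Real.exp (-lam) * lam ^ n / n.factorial) • Measure.dirac (n • x₀)

/-!
On the first two coordinates `T` is the sum of the homomorphisms `x ↦ (x, bᵢ x)`, which send the
Poisson laws along `x₀` to Poisson laws along the single vector `(x₀, b₁ x₀) = (x₀, b₂ x₀)`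
of `X × X`. Both images are therefore `e(4a E_{(x₀, b₁ x₀)})` convolved with the image of `μ`.

If `e(a E_{x₀}) = e(2a E_{x₀}) ∗ E_x`, the atom of the right side at `x` forces `x = k x₀`.
Instead of a character of `X`, integrate `ψ (n x₀) = ωⁿ`, where `ω = exp (i t) ≠ 1` satisfies
`ω ^ addOrderOf x₀ = 1`, so that `ψ` is well defined on the multiples of `x₀`. This gives
`exp (a (ω - 1)) = ωᵏ exp (2a (ω - 1))`, and taking absolute values
`exp (a (cos t - 1)) = exp (2a (cos t - 1))`, impossible since `cos t < 1`.
-/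

open Complex
open scoped NNReal

namespace MeasureTheory.Measure

section Convolution

variable {M : Type*} [AddMonoid M] [MeasurableSpace M] [MeasurableAdd₂ M]
  {α β γ : Type*} [MeasurableSpace α] [MeasurableSpace β] [MeasurableSpace γ]

theorem map_prod_add_eq_map_conv_map {μ : Measure α} {ν : Measure β} [SFinite μ] [SFinite ν]
    {f : α → M} {g : β → M} (hf : Measurable f) (hg : Measurable g) :
    (μ.prod ν).map (fun p => f p.1 + g p.2) = μ.map f ∗ ν.map g := by
  rw [conv, map_prod_map _ _ hf hg, map_map measurable_add (hf.prodMap hg)]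
  rfl

theorem map_prod_prod_add_eq_map_conv_map_conv_map {μ : Measure α} {ν : Measure β}
    {ρ : Measure γ} [SFinite μ] [SFinite ν] [SFinite ρ] {f : α → M} {g : β → M} {h : γ → M}
    (hf : Measurable f) (hg : Measurable g) (hh : Measurable h) :
    (μ.prod (ν.prod ρ)).map (fun q => f q.1 + (g q.2.1 + h q.2.2)) =
      μ.map f ∗ (ν.map g ∗ ρ.map h) := by
  rw [map_prod_add_eq_map_conv_map (g := fun p : β × γ => g p.1 + h p.2) hf (by fun_prop),
    map_prod_add_eq_map_conv_map hg hh]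

end Convolution

theorem map_sum_smul_dirac {ι α β : Type*} [MeasurableSpace α] [MeasurableSpace β]
    (c : ι → ENNReal) (z : ι → α) {f : α → β} (hf : Measurable f) :
    (Measure.sum fun i => c i • dirac (z i)).map f =
      Measure.sum fun i => c i • dirac (f (z i)) := by
  simp_rw [map_sum hf.aemeasurable, Measure.map_smul, map_dirac' hf]

end MeasureTheory.Measure

open Measure

section Poisson

variable {X : Type*} [AddCommMonoid X] [MeasurableSpace X]

instance (r : ℝ) (x : X) : SFinite (poissonMeasure r x) := by
  unfold poissonMeasure
  infer_instance

theorem map_poissonMeasure {Y : Type*} [AddCommMonoid Y] [MeasurableSpace Y]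
    (f : X →+ Y) (hf : Measurable f) (r : ℝ) (x : X) :
    (poissonMeasure r x).map f = poissonMeasure r (f x) := by
  simp_rw [poissonMeasure, map_sum_smul_dirac _ _ hf, map_nsmul]

theorem poissonMeasure_one_nat (r : ℝ≥0) :
    poissonMeasure r (1 : ℕ) = ProbabilityTheory.poissonMeasure r := by
  simp [poissonMeasure, ProbabilityTheory.poissonMeasure]

variable [MeasurableAdd₂ X]

theorem poissonMeasure_conv_poissonMeasure {r s : ℝ} (hr : 0 ≤ r) (hs : 0 ≤ s) (x : X) :
    poissonMeasure r x ∗ poissonMeasure s x = poissonMeasure (r + s) x := by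
  lift r to ℝ≥0 using hr
  lift s to ℝ≥0 using hs
  have h (u : ℝ≥0) :
      poissonMeasure u x = (ProbabilityTheory.poissonMeasure u).map (multiplesHom X x) := by
    rw [← poissonMeasure_one_nat, map_poissonMeasure _ .of_discrete, multiplesHom_apply,
      one_nsmul]
  rw [h, h, ← NNReal.coe_add, h, ← map_conv_addMonoidHom _ .of_discrete,
    ProbabilityTheory.poissonMeasure_conv_poissonMeasure]

theorem poissonMeasure_conv_dirac (r : ℝ) (x₀ x : X) :
    poissonMeasure r x₀ ∗ dirac x = Measure.sum fun n : ℕ =>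
      ENNReal.ofReal (Real.exp (-r) * r ^ n / n.factorial) • dirac (n • x₀ + x) := by
  rw [conv_dirac, poissonMeasure, map_sum_smul_dirac _ _ (by fun_prop)]

variable [MeasurableSingletonClass X]

theorem integral_poissonMeasure_conv_dirac {E : Type*} [NormedAddCommGroup E] [NormedSpace ℝ E]
    [FiniteDimensional ℝ E] {r : ℝ} (hr : 0 ≤ r) (x₀ x : X) (f : X → E) :
    ∫ y, f y ∂(poissonMeasure r x₀ ∗ dirac x) =
      ∑' n : ℕ, (Real.exp (-r) * r ^ n / n.factorial) • f (n • x₀ + x) := by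
  rw [poissonMeasure_conv_dirac, integral_sum_dirac fun _ => ENNReal.ofReal_ne_top]
  congr with n
  rw [ENNReal.toReal_ofReal (by positivity)]

theorem exists_nsmul_eq_of_poissonMeasure_eq_conv_dirac {r s : ℝ} {x₀ x : X}
    (h : poissonMeasure r x₀ = poissonMeasure s x₀ ∗ dirac x) : ∃ k : ℕ, k • x₀ = x := by
  by_contra! hx
  have hr : poissonMeasure r x₀ {x} = 0 := by
    simp [poissonMeasure, hx]
  have hs : 0 < (poissonMeasure s x₀ ∗ dirac x) {x} := by
    rw [poissonMeasure_conv_dirac]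
    refine lt_of_lt_of_le ?_ (le_sum _ 0 {x})
    simp [Real.exp_pos]
  exact hs.ne' (h ▸ hr)

end Poisson

theorem tsum_poisson_smul_pow (r : ℝ) (z : ℂ) :
    ∑' n : ℕ, (Real.exp (-r) * r ^ n / n.factorial) • z ^ n = cexp (r * (z - 1)) := by
  calc ∑' n : ℕ, (Real.exp (-r) * r ^ n / n.factorial) • z ^ n
  _ = ∑' n : ℕ, (Real.exp (-r) : ℂ) * ((r * z) ^ n / n.factorial) := by
      congr with n
      rw [real_smul]
      push_cast
      ring
  _ = Real.exp (-r) * cexp (r * z) := by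
      rw [tsum_mul_left, (NormedSpace.expSeries_div_hasSum_exp ((r : ℂ) * z)).tsum_eq,
        exp_eq_exp_ℂ]
  _ = cexp (r * (z - 1)) := by
      rw [ofReal_exp, ← Complex.exp_add]
      push_cast
      ring_nf

theorem exists_cos_lt_one_exp_pow_eq_one {q : ℕ} (hq : q ≠ 1) :
    ∃ t : ℝ, Real.cos t < 1 ∧ cexp (t * I) ^ q = 1 := by
  obtain rfl | hq0 := eq_or_ne q 0
  · exact ⟨Real.pi, by simp, pow_zero _⟩
  have hq2 : (2 : ℝ) ≤ q := by norm_cast; omega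
  refine ⟨2 * Real.pi / q, ?_, ?_⟩
  · rw [← Real.cos_zero]
    apply Real.cos_lt_cos_of_nonneg_of_le_pi le_rfl
    · rw [div_le_iff₀ (by positivity)]
      nlinarith [Real.pi_pos]
    · positivity
  · rw [← Complex.exp_nat_mul]
    convert Complex.exp_two_pi_mul_I using 2
    push_cast
    field_simp

theorem poissonMeasure_ne_conv_dirac {X : Type*} [AddCancelCommMonoid X] [MeasurableSpace X]
    [MeasurableAdd₂ X] [MeasurableSingletonClass X] {x₀ : X} (hx₀ : x₀ ≠ 0) {r s : ℝ}
    (hr : 0 ≤ r) (hs : 0 ≤ s) (hrs : r ≠ s) (x : X) :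
    poissonMeasure r x₀ ≠ poissonMeasure s x₀ ∗ dirac x := by
  intro h
  obtain ⟨k, rfl⟩ := exists_nsmul_eq_of_poissonMeasure_eq_conv_dirac h
  obtain ⟨t, hcos, hpow⟩ :=
    exists_cos_lt_one_exp_pow_eq_one (AddMonoid.addOrderOf_eq_one_iff.not.mpr hx₀)
  set ω := cexp (t * I)
  have hω : Function.FactorsThrough (ω ^ ·) (· • x₀) := fun m n hmn =>
    pow_eq_pow_of_modEq (nsmul_eq_nsmul_iff_modEq.mp hmn) hpow
  have key := congrArg (fun ρ => ∫ y, Function.extend (· • x₀) (ω ^ ·) 0 y ∂ρ) h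
  rw [← conv_dirac_zero (poissonMeasure r x₀), integral_poissonMeasure_conv_dirac hr,
    integral_poissonMeasure_conv_dirac hs] at key
  simp_rw [add_zero, ← add_nsmul, hω.extend_apply, pow_add, ← smul_mul_assoc, tsum_mul_right,
    tsum_poisson_smul_pow] at key
  have hnorm := congrArg norm key
  rw [norm_mul, norm_pow, norm_exp_ofReal_mul_I, one_pow, mul_one, Complex.norm_exp,
    Complex.norm_exp, Real.exp_eq_exp] at hnorm
  have hre (u : ℝ) : ((u : ℂ) * (ω - 1)).re = u * (Real.cos t - 1) := by
    simp [ω, exp_ofReal_mul_I_re]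
  rw [hre, hre] at hnorm
  exact hrs (mul_right_cancel₀ (sub_ne_zero.mpr hcos.ne) hnorm)

theorem poisson_counterexample_general
    {X : Type*} [TopologicalSpace X] [AddCommGroup X] [IsTopologicalAddGroup X]
    [T2Space X] [SecondCountableTopology X]
    [MeasurableSpace X] [BorelSpace X]
    (b₁ b₂ b₃ : X →+ X) (hb₁ : Continuous b₁) (hb₂ : Continuous b₂) (hb₃ : Continuous b₃)
    (x₀ : X) (hx₀ : x₀ ≠ 0) (hbx₀ : b₁ x₀ = b₂ x₀)
    (a : ℝ) (ha : 0 < a)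
    (μ : Measure X) [IsProbabilityMeasure μ]
    (μ₁ μ₂ μ₃ ν₁ ν₂ ν₃ : Measure X)
    (hμ₁ : μ₁ = poissonMeasure (2 * a) x₀) (hμ₂ : μ₂ = poissonMeasure (2 * a) x₀)
    (hν₁ : ν₁ = poissonMeasure a x₀) (hν₂ : ν₂ = poissonMeasure (3 * a) x₀)
    (hμ₃ : μ₃ = μ) (hν₃ : ν₃ = μ)
    (T : X × X × X → X × X)
    (hT : T = fun q => (q.1 + q.2.1 + q.2.2, b₁ q.1 + b₂ q.2.1 + b₃ q.2.2)) :
    (μ₁.prod (μ₂.prod μ₃)).map T = (ν₁.prod (ν₂.prod ν₃)).map T ∧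
      ¬∃ x : X, ν₁ = μ₁ ∗ Measure.dirac x := by
  subst hμ₁ hμ₂ hν₁ hν₂ hμ₃ hν₃ hT
  refine ⟨?_, fun ⟨x, hx⟩ =>
    poissonMeasure_ne_conv_dirac hx₀ ha.le (by positivity) (by linarith : a < 2 * a).ne x hx⟩
  let c (b : X →+ X) : X →+ X × X := (AddMonoidHom.id X).prod b
  have hc {b : X →+ X} (hb : Continuous b) : Measurable (c b) :=
    (continuous_id.prodMk hb).measurable
  have hT : (fun q : X × X × X => (q.1 + q.2.1 + q.2.2, b₁ q.1 + b₂ q.2.1 + b₃ q.2.2)) =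
      fun q => c b₁ q.1 + (c b₂ q.2.1 + c b₃ q.2.2) := by
    ext q <;> simp [c, add_assoc]
  have hcx₀ : c b₂ x₀ = c b₁ x₀ := by simp [c, hbx₀]
  rw [hT, map_prod_prod_add_eq_map_conv_map_conv_map (hc hb₁) (hc hb₂) (hc hb₃),
    map_prod_prod_add_eq_map_conv_map_conv_map (hc hb₁) (hc hb₂) (hc hb₃),
    map_poissonMeasure _ (hc hb₁), map_poissonMeasure _ (hc hb₂), map_poissonMeasure _ (hc hb₁),
    map_poissonMeasure _ (hc hb₂), hcx₀, ← conv_assoc, ← conv_assoc,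
    poissonMeasure_conv_poissonMeasure (by positivity) (by positivity),
    poissonMeasure_conv_poissonMeasure ha.le (by positivity),
    show 2 * a + 2 * a = a + 3 * a by ring]

/-- Counterexample showing that the kernel conditions cannot be omitted from the
Rao-type theorem: if `x₀ ≠ 0` and `b₁x₀ = b₂x₀`, then with
`μ₁ = μ₂ = e(2aE_{x₀})`, `ν₁ = e(aE_{x₀})`, `ν₂ = e(3aE_{x₀})`, `μ₃ = ν₃ = μ`,
the two pushforwards under `T` coincide, while `ν₁` is not a shift of `μ₁`. -/
theorem poisson_counterexample
    {X : Type*} [TopologicalSpace X] [AddCommGroup X] [IsTopologicalAddGroup X]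
    [LocallyCompactSpace X] [T2Space X] [SecondCountableTopology X]
    [MeasurableSpace X] [BorelSpace X]
    (b₁ b₂ b₃ : X →+ X) (hb₁ : Continuous b₁) (hb₂ : Continuous b₂) (hb₃ : Continuous b₃)
    (x₀ : X) (hx₀ : x₀ ≠ 0) (hbx₀ : b₁ x₀ = b₂ x₀)
    (a : ℝ) (ha : 0 < a)
    (μ : Measure X) [IsProbabilityMeasure μ]
    (μ₁ μ₂ μ₃ ν₁ ν₂ ν₃ : Measure X)
    (hμ₁ : μ₁ = poissonMeasure (2 * a) x₀) (hμ₂ : μ₂ = poissonMeasure (2 * a) x₀)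
    (hν₁ : ν₁ = poissonMeasure a x₀) (hν₂ : ν₂ = poissonMeasure (3 * a) x₀)
    (hμ₃ : μ₃ = μ) (hν₃ : ν₃ = μ)
    (T : X × X × X → X × X)
    (hT : T = fun q => (q.1 + q.2.1 + q.2.2, b₁ q.1 + b₂ q.2.1 + b₃ q.2.2)) :
    (μ₁.prod (μ₂.prod μ₃)).map T = (ν₁.prod (ν₂.prod ν₃)).map T ∧
      ¬∃ x : X, ν₁ = μ₁ ∗ Measure.dirac x :=
  poisson_counterexample_general b₁ b₂ b₃ hb₁ hb₂ hb₃ x₀ hx₀ hbx₀ a ha μ μ₁ μ₂ μ₃ ν₁ ν₂ ν₃ hμ₁ hμ₂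
    hν₁ hν₂ hμ₃ hν₃ T hT
end
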